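/- arXiv:0910.2900 — 5 statements merged into one kernel-verified Lean document; each statement's English description precedes it below -/
import Mathlib

section
/- Let n ≥ 1, let X ∈ M_n(ℂ) be regular nilpotent, and let v₀ ∈ ℂⁿ be a nonzero vector with X^{n−1}v₀ = 0. Then there exists a diagonalizable matrix Y ∈ M_n(ℂ) which is not a scalar multiple of the identity such that the range of the commutator [X,Y] = XY − YX is contained in the line ℂv₀ (i.e., for every u ∈ ℂⁿ there is c ∈ ℂ with (XY − YX)u = c·v₀). -/
/-!
Let `m` be the largest exponent with `X ^ m v₀ ≠ 0`; then `m + 1 < n`, and `v₀, X v₀, …, X ^ m v₀`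
are linearly independent, so some functional `ψ` satisfies `ψ (X ^ e v₀) = δ_{e,m}`. For the
rank-one matrix `A = v₀ ψᵀ` this gives `A X ^ e A = δ_{e,m} A`, so `Y = ∑_{i+j=m} X ^ i A X ^ j`
is idempotent of trace `m + 1`; it is therefore diagonalizable and, as `0 < m + 1 < n`, not scalar.
Finally the sum telescopes: `[X, Y] = X ^ (m+1) A - A X ^ (m+1) = -A X ^ (m+1)`, whose range lies
in `ℂ v₀`.
-/

def Matrix.IsDiagonalizable {n : ℕ} (A : Matrix (Fin n) (Fin n) ℂ) : Prop :=
  ∃ P : Matrix (Fin n) (Fin n) ℂ, IsUnit P.det ∧ (P⁻¹ * A * P).IsDiag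

open Finset Matrix

namespace Matrix

variable {K ι : Type*} [Field K] [Fintype ι]

lemma vecMulVec_mul_mul_vecMulVec (v ψ : ι → K) (M : Matrix ι ι K) :
    vecMulVec v ψ * M * vecMulVec v ψ = (ψ ⬝ᵥ M *ᵥ v) • vecMulVec v ψ := by
  rw [Matrix.mul_assoc, mul_vecMulVec, vecMulVec_mul_vecMulVec, vecMulVec_smul]

lemma trace_vecMulVec_mul (v ψ : ι → K) (M : Matrix ι ι K) :
    (vecMulVec v ψ * M).trace = ψ ⬝ᵥ M *ᵥ v := by
  rw [vecMulVec_mul, trace_vecMulVec, dotProduct_comm, dotProduct_mulVec]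

variable [DecidableEq ι]

lemma not_exists_eq_smul_one_of_isIdempotentElem {Y : Matrix ι ι K} (hY : IsIdempotentElem Y)
    (h0 : Y.trace ≠ 0) (h1 : Y.trace ≠ Fintype.card ι) : ¬∃ c : K, Y = c • 1 := by
  rintro ⟨c, rfl⟩
  have htr := congrArg trace hY.eq
  simp only [trace_smul, trace_one, smul_mul_smul_comm, Matrix.one_mul, smul_eq_mul] at htr h0 h1
  have hc : c = 1 := mul_right_cancel₀ h0 (by rw [one_mul, ← mul_assoc, htr])
  exact h1 (by rw [hc, one_mul])

variable (X : Matrix ι ι K) {v ψ : ι → K} {m : ℕ}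

lemma exists_pow_mulVec_ne_zero_and_pow_succ_mulVec_eq_zero (hv : v ≠ 0) {k : ℕ}
    (hk : (X ^ k) *ᵥ v = 0) : ∃ m < k, (X ^ m) *ᵥ v ≠ 0 ∧ (X ^ (m + 1)) *ᵥ v = 0 := by
  induction k with
  | zero => simp_all
  | succ k ih =>
    by_cases hk' : (X ^ k) *ᵥ v = 0
    · obtain ⟨m, hmk, hm⟩ := ih hk'
      exact ⟨m, by omega, hm⟩
    · exact ⟨k, by omega, hk', hk⟩

lemma linearIndependent_pow_mulVec (hm : (X ^ m) *ᵥ v ≠ 0) (hm1 : (X ^ (m + 1)) *ᵥ v = 0) :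
    LinearIndependent K (fun i : Fin (m + 1) => (X ^ (i : ℕ)) *ᵥ v) := by
  induction m generalizing v with
  | zero => simpa using hm
  | succ m ih =>
    have htail : Fin.tail (fun i : Fin (m + 2) => (X ^ (i : ℕ)) *ᵥ v)
        = fun i : Fin (m + 1) => (X ^ (i : ℕ)) *ᵥ (X *ᵥ v) := by
      ext1 i; simp [Fin.tail, pow_succ, mulVec_mulVec]
    rw [linearIndependent_finSucc, htail]
    refine ⟨ih (by rwa [mulVec_mulVec, ← pow_succ]) (by rwa [mulVec_mulVec, ← pow_succ]), ?_⟩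
    -- `X ^ (m + 1)` kills every `X ^ (i + 1) v`, but not `v`.
    intro hspan
    have hker : Submodule.span K (Set.range fun i : Fin (m + 1) => (X ^ (i : ℕ)) *ᵥ (X *ᵥ v))
        ≤ LinearMap.ker (X ^ (m + 1)).mulVecLin := by
      rw [Submodule.span_le]
      rintro _ ⟨i, rfl⟩
      have : (X ^ (i : ℕ)) *ᵥ ((X ^ (m + 2)) *ᵥ v) = 0 := by rw [hm1, mulVec_zero]
      simp only [SetLike.mem_coe, LinearMap.mem_ker, mulVecLin_apply, mulVec_mulVec, ← pow_succ,
        ← pow_add] at this ⊢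
      rwa [show m + 1 + (i + 1) = (i : ℕ) + (m + 2) by omega]
    exact hm (by simpa using hker hspan)

lemma exists_dotProduct_pow_mulVec_eq_ite (hm : (X ^ m) *ᵥ v ≠ 0)
    (hm1 : (X ^ (m + 1)) *ᵥ v = 0) :
    ∃ ψ : ι → K, ∀ e : ℕ, ψ ⬝ᵥ (X ^ e) *ᵥ v = if e = m then 1 else 0 := by
  have hspan := span_flip_eq_top_iff_linearIndependent.mpr (linearIndependent_pow_mulVec X hm hm1)
  obtain ⟨ψ, hψ⟩ := (Submodule.mem_span_range_iff_exists_fun K).mp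
    (hspan ▸ Submodule.mem_top : Pi.single (Fin.last m) 1 ∈ _)
  refine ⟨ψ, fun e => ?_⟩
  rcases lt_or_ge m e with hme | hem
  · rw [if_neg hme.ne', ← Nat.sub_add_cancel hme, pow_add, ← mulVec_mulVec, hm1, mulVec_zero,
      dotProduct_zero]
  · simpa [dotProduct, flip, Pi.single_apply, Fin.ext_iff] using congrFun hψ ⟨e, by omega⟩

def cyclicProj (v ψ : ι → K) (m : ℕ) : Matrix ι ι K :=
  ∑ p ∈ antidiagonal m, X ^ p.1 * vecMulVec v ψ * X ^ p.2

lemma isIdempotentElem_cyclicProj (hψ : ∀ e : ℕ, ψ ⬝ᵥ (X ^ e) *ᵥ v = if e = m then 1 else 0) :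
    IsIdempotentElem (cyclicProj X v ψ m) := by
  have hterm : ∀ p q : ℕ × ℕ,
      X ^ p.1 * vecMulVec v ψ * X ^ p.2 * (X ^ q.1 * vecMulVec v ψ * X ^ q.2)
        = (if p.2 + q.1 = m then 1 else 0 : K) • (X ^ p.1 * vecMulVec v ψ * X ^ q.2) := by
    intro p q
    rw [← hψ, ← smul_mul_assoc, ← mul_smul_comm, ← vecMulVec_mul_mul_vecMulVec, pow_add]
    simp only [Matrix.mul_assoc]
  unfold IsIdempotentElem cyclicProj
  rw [sum_mul_sum]
  refine sum_congr rfl fun p hp => ?_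
  simp_rw [hterm]
  rw [sum_eq_single_of_mem p hp]
  · simp [(HasAntidiagonal.mem_antidiagonal.mp hp).symm, add_comm]
  · intro q hq hqp
    rw [HasAntidiagonal.mem_antidiagonal] at hp hq
    rw [if_neg (fun h => hqp (Prod.ext (by omega) (by omega))), zero_smul]

lemma commutator_cyclicProj (hm1 : (X ^ (m + 1)) *ᵥ v = 0) :
    X * cyclicProj X v ψ m - cyclicProj X v ψ m * X = -(vecMulVec v ψ * X ^ (m + 1)) := by
  have hXY : X * cyclicProj X v ψ m
      = ∑ p ∈ antidiagonal m, X ^ (p.1 + 1) * vecMulVec v ψ * X ^ p.2 := by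
    simp only [cyclicProj, mul_sum, pow_succ', Matrix.mul_assoc]
  have hYX : cyclicProj X v ψ m * X
      = ∑ p ∈ antidiagonal m, X ^ p.1 * vecMulVec v ψ * X ^ (p.2 + 1) := by
    simp only [cyclicProj, sum_mul, pow_succ, Matrix.mul_assoc]
  have hXA : X ^ (m + 1) * vecMulVec v ψ = 0 := by rw [mul_vecMulVec, hm1, zero_vecMulVec]
  -- Peel off either end of the sum over `i + j = m + 1`.
  have htel := (Nat.sum_antidiagonal_succ (n := m)
    (f := fun p => X ^ p.1 * vecMulVec v ψ * X ^ p.2)).symm.trans Nat.sum_antidiagonal_succ'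
  simp only [pow_zero, Matrix.one_mul, Matrix.mul_one, hXA, zero_add] at htel
  rw [hXY, hYX, ← htel]
  abel

lemma trace_cyclicProj (hψ : ψ ⬝ᵥ (X ^ m) *ᵥ v = 1) :
    (cyclicProj X v ψ m).trace = m + 1 := by
  have hterm : ∀ p ∈ antidiagonal m, (X ^ p.1 * vecMulVec v ψ * X ^ p.2).trace = 1 := by
    intro p hp
    rw [trace_mul_cycle, ← pow_add, trace_mul_comm, trace_vecMulVec_mul,
      add_comm, HasAntidiagonal.mem_antidiagonal.mp hp, hψ]
  rw [cyclicProj, trace_sum, sum_congr rfl hterm]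
  simp

end Matrix

lemma Matrix.isDiagonalizable_of_basis {n : ℕ} {ι : Type*} [Fintype ι]
    (Y : Matrix (Fin n) (Fin n) ℂ) (b : Module.Basis ι ℂ (Fin n → ℂ))
    (hb : ∀ i, ∃ d : ℂ, Y *ᵥ b i = d • b i) :
    Y.IsDiagonalizable := by
  set b' := b.reindex (b.indexEquiv (Pi.basisFun ℂ (Fin n)))
  set P := (Pi.basisFun ℂ (Fin n)).toMatrix b'
  have hP : P⁻¹ = b'.toMatrix (Pi.basisFun ℂ (Fin n)) :=
    inv_eq_left_inv (b'.toMatrix_mul_toMatrix_flip _)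
  refine ⟨P, isUnit_det_of_left_inverse (b'.toMatrix_mul_toMatrix_flip _), ?_⟩
  rw [hP, ← LinearMap.toMatrix'_toLin' Y, ← LinearMap.toMatrix_eq_toMatrix',
    basis_toMatrix_mul_linearMap_toMatrix_mul_basis_toMatrix]
  intro i j hij
  obtain ⟨d, hd⟩ := hb ((b.indexEquiv (Pi.basisFun ℂ (Fin n))).symm j)
  simp [LinearMap.toMatrix_apply, b', hd, hij.symm]

lemma IsIdempotentElem.isDiagonalizable {n : ℕ} {Y : Matrix (Fin n) (Fin n) ℂ}
    (hY : IsIdempotentElem Y) : Y.IsDiagonalizable := by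
  set f := toLin' Y
  have hf : IsIdempotentElem f := hY.map toLinAlgEquiv'
  refine Y.isDiagonalizable_of_basis (((Module.Basis.ofVectorSpace ℂ (LinearMap.range f)).prod
    (Module.Basis.ofVectorSpace ℂ (LinearMap.ker f))).map
      (Submodule.prodEquivOfIsCompl _ _ (LinearMap.IsIdempotentElem.isCompl hf))) ?_
  rintro (i | i)
  · refine ⟨1, ?_⟩
    simpa [f] using (LinearMap.IsIdempotentElem.mem_range_iff hf).mp
      (Module.Basis.ofVectorSpace ℂ (LinearMap.range f) i).2
  · refine ⟨0, ?_⟩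
    have hi := LinearMap.mem_ker.mp (Module.Basis.ofVectorSpace ℂ (LinearMap.ker f) i).2
    rw [toLin'_apply] at hi
    simpa using hi

theorem stmt_0_general (n : ℕ) (X : Matrix (Fin n) (Fin n) ℂ)
    (v₀ : Fin n → ℂ) (hv₀ : v₀ ≠ 0) (hv : (X ^ (n - 1)).mulVec v₀ = 0) :
    ∃ Y : Matrix (Fin n) (Fin n) ℂ, Y.IsDiagonalizable ∧
      (¬ ∃ c : ℂ, Y = c • (1 : Matrix (Fin n) (Fin n) ℂ)) ∧
      ∀ u : Fin n → ℂ, ∃ c : ℂ, (X * Y - Y * X).mulVec u = c • v₀ := by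
  obtain ⟨m, hmn, hm, hm1⟩ := X.exists_pow_mulVec_ne_zero_and_pow_succ_mulVec_eq_zero hv₀ hv
  obtain ⟨ψ, hψ⟩ := X.exists_dotProduct_pow_mulVec_eq_ite hm hm1
  have hY := X.isIdempotentElem_cyclicProj hψ
  have htr := X.trace_cyclicProj (by simpa using hψ m)
  refine ⟨X.cyclicProj v₀ ψ m, hY.isDiagonalizable, ?_, fun u => ⟨-(ψ ⬝ᵥ (X ^ (m + 1)) *ᵥ u), ?_⟩⟩
  · refine not_exists_eq_smul_one_of_isIdempotentElem hY ?_ ?_ <;> rw [htr]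
    · exact_mod_cast m.succ_ne_zero
    · exact_mod_cast (by rw [Fintype.card_fin]; omega : m + 1 ≠ Fintype.card (Fin n))
  · rw [X.commutator_cyclicProj hm1, neg_mulVec, ← mulVec_mulVec, vecMulVec_mulVec,
      op_smul_eq_smul, neg_smul]

/-- If `X` is regular nilpotent and `v₀ ≠ 0` satisfies `X^(n-1) v₀ = 0`, then there is a
diagonalizable matrix `Y`, not a scalar multiple of the identity, such that the range of
the commutator `[X, Y]` is contained in the line `ℂ v₀`. -/
theorem stmt_0 (n : ℕ) (hn : 1 ≤ n) (X : Matrix (Fin n) (Fin n) ℂ)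
    (hXnil : X ^ n = 0) (hXreg : X ^ (n - 1) ≠ 0)
    (v₀ : Fin n → ℂ) (hv₀ : v₀ ≠ 0) (hv : (X ^ (n - 1)).mulVec v₀ = 0) :
    ∃ Y : Matrix (Fin n) (Fin n) ℂ, Y.IsDiagonalizable ∧
      (¬ ∃ c : ℂ, Y = c • (1 : Matrix (Fin n) (Fin n) ℂ)) ∧
      ∀ u : Fin n → ℂ, ∃ c : ℂ, (X * Y - Y * X).mulVec u = c • v₀ :=
  stmt_0_general n X v₀ hv₀ hv
end

section
/- Let n ≥ 1, let v₀ ∈ ℂⁿ be nonzero, and let X, X′ ∈ M_n(ℂ) be two regular nilpotent matrices with d(X, v₀) = d(X′, v₀). Then there exists an invertible matrix g ∈ GL_n(ℂ) with g·v₀ = v₀ and gXg⁻¹ = X′. In other words, the orbits of the stabilizer P = {g ∈ GL_n(ℂ) : g·v₀ = v₀} on the set of regular nilpotent matrices are classified by the integer d(X, v₀). -/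
open Module


open Module

lemma lemL {V : Type*} [AddCommGroup V] [Module ℂ V] (f : Module.End ℂ V) (N : ℕ)
    (w : V) (hw : (f ^ (N - 1)) w ≠ 0) (hwN : (f ^ N) w = 0)
    (k : ℕ) (c : Fin N → ℂ)
    (h : ∑ i : Fin N, c i • (f ^ (k + (i : ℕ))) w = 0) :
    ∀ i : Fin N, k + (i : ℕ) < N → c i = 0 := by
  classical
  have hz : ∀ e, N ≤ e → (f ^ e) w = 0 := by
    intro e he
    rw [show e = (e - N) + N by omega, pow_add, Module.End.mul_apply, hwN, map_zero]
  by_contra hc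
  push_neg at hc
  obtain ⟨i₁, hi₁, hci₁⟩ := hc
  set s : Finset (Fin N) := Finset.univ.filter (fun i => k + (i : ℕ) < N ∧ c i ≠ 0) with hs_def
  have hs : s.Nonempty := ⟨i₁, by simp [hs_def, hi₁, hci₁]⟩
  set i₀ := s.min' hs with hi₀_def
  have hi₀mem : i₀ ∈ s := s.min'_mem hs
  rw [hs_def, Finset.mem_filter] at hi₀mem
  obtain ⟨-, hlt, hne⟩ := hi₀mem
  set a := N - 1 - (k + (i₀ : ℕ)) with ha_def
  have key : ∑ j : Fin N, c j • (f ^ (a + (k + (j : ℕ)))) w = 0 := by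
    have h2 : ∀ j : Fin N, c j • (f ^ (a + (k + (j : ℕ)))) w
        = (f ^ a) (c j • (f ^ (k + (j : ℕ))) w) := by
      intro j
      rw [map_smul, ← Module.End.mul_apply, ← pow_add]
    rw [Finset.sum_congr rfl (fun j _ => h2 j), ← map_sum, h, map_zero]
  have h1 : ∀ j : Fin N, j ∈ Finset.univ → j ≠ i₀ →
      c j • (f ^ (a + (k + (j : ℕ)))) w = 0 := by
    intro j _ hj
    by_cases hcj : c j = 0
    · simp [hcj]
    by_cases hjN : N ≤ k + (j : ℕ)
    · rw [hz _ (by omega), smul_zero]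
    · have hjmem : j ∈ s := by
        rw [hs_def, Finset.mem_filter]
        exact ⟨Finset.mem_univ _, by omega, hcj⟩
      have hle : i₀ ≤ j := s.min'_le j hjmem
      have hij : (i₀ : ℕ) < (j : ℕ) := Fin.lt_def.mp (lt_of_le_of_ne hle (Ne.symm hj))
      rw [hz _ (by omega), smul_zero]
  rw [Finset.sum_eq_single i₀ h1 (by simp)] at key
  rw [show a + (k + (i₀ : ℕ)) = N - 1 by omega] at key
  rcases smul_eq_zero.mp key with h' | h'
  · exact hne h'
  · exact hw h'

lemma lem_li {V : Type*} [AddCommGroup V] [Module ℂ V] (f : Module.End ℂ V) (N : ℕ)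
    (w : V) (hw : (f ^ (N - 1)) w ≠ 0) (hwN : (f ^ N) w = 0) :
    LinearIndependent ℂ (fun i : Fin N => (f ^ (i : ℕ)) w) := by
  rw [Fintype.linearIndependent_iff]
  intro c hc i
  refine lemL f N w hw hwN 0 c ?_ i (by simp [i.2])
  simpa using hc

lemma lem_finrank {V : Type*} [AddCommGroup V] [Module ℂ V] (n : ℕ)
    (f : Module.End ℂ V) (v₀ : V) (k : ℕ) (hkn : k ≤ n)
    (hk0 : (f ^ k) v₀ = 0) (hk1 : (f ^ (k - 1)) v₀ ≠ 0) :
    Module.finrank ℂ (Submodule.span ℂ (Set.range fun i : Fin n => (f ^ (i : ℕ)) v₀)) = k := by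
  have hz : ∀ e, k ≤ e → (f ^ e) v₀ = 0 := by
    intro e he
    rw [show e = (e - k) + k by omega, pow_add, Module.End.mul_apply, hk0, map_zero]
  have li : LinearIndependent ℂ (fun i : Fin k => (f ^ (i : ℕ)) v₀) := lem_li f k v₀ hk1 hk0
  have hspan : Submodule.span ℂ (Set.range fun i : Fin n => (f ^ (i : ℕ)) v₀)
      = Submodule.span ℂ (Set.range fun i : Fin k => (f ^ (i : ℕ)) v₀) := by
    apply le_antisymm <;> rw [Submodule.span_le] <;> rintro x ⟨i, rfl⟩
    · by_cases h : (i : ℕ) < k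
      · exact Submodule.subset_span ⟨⟨i, h⟩, rfl⟩
      · simp only [hz i (le_of_not_gt h)]
        exact Submodule.zero_mem _
    · exact Submodule.subset_span ⟨⟨i, lt_of_lt_of_le i.2 hkn⟩, rfl⟩
  rw [hspan, finrank_span_eq_card li, Fintype.card_fin]

lemma lem_cyclic (n : ℕ) (hn : 1 ≤ n) (f : Module.End ℂ (Fin n → ℂ))
    (hf : (f ^ n) = 0) (u : Fin n → ℂ) (hu : (f ^ (n - 1)) u ≠ 0)
    (v₀ : Fin n → ℂ) (k : ℕ) (hk1 : 1 ≤ k) (hkn : k ≤ n)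
    (hk0 : (f ^ k) v₀ = 0) (hkm : (f ^ (k - 1)) v₀ ≠ 0) :
    ∃ w, (f ^ (n - 1)) w ≠ 0 ∧ (f ^ (n - k)) w = v₀ := by
  classical
  have hfn : ∀ v, (f ^ n) v = 0 := fun v => by rw [hf]; rfl
  have hz : ∀ e, n ≤ e → ∀ v, (f ^ e) v = 0 := by
    intro e he v
    rw [show e = (e - n) + n by omega, pow_add, Module.End.mul_apply, hfn, map_zero]
  have li := lem_li f n u hu (hfn u)
  haveI : Nonempty (Fin n) := ⟨⟨0, hn⟩⟩
  have card_eq : Fintype.card (Fin n) = Module.finrank ℂ (Fin n → ℂ) := by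
    simp [Module.finrank_fin_fun]
  let b : Basis (Fin n) ℂ (Fin n → ℂ) :=
    basisOfLinearIndependentOfCardEqFinrank li card_eq
  have hb : ∀ i : Fin n, b i = (f ^ (i : ℕ)) u := fun i => by
    rw [show b = _ from rfl, coe_basisOfLinearIndependentOfCardEqFinrank]
  set c : Fin n → ℂ := fun i => b.repr v₀ i with hc_def
  have hv : ∑ i : Fin n, c i • (f ^ (i : ℕ)) u = v₀ := by
    conv_rhs => rw [← b.sum_repr v₀]
    exact Finset.sum_congr rfl fun i _ => by rw [hb]
  set m := n - k with hm_def
  have hmn : m < n := by omega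
  have h1 : ∀ i : Fin n, (i : ℕ) < m → c i = 0 := by
    intro i hi
    have hsum : ∑ j : Fin n, c j • (f ^ (k + (j : ℕ))) u = 0 := by
      have : ∀ j : Fin n, c j • (f ^ (k + (j : ℕ))) u = (f ^ k) (c j • (f ^ (j : ℕ)) u) := by
        intro j
        rw [map_smul, ← Module.End.mul_apply, ← pow_add]
      rw [Finset.sum_congr rfl fun j _ => this j, ← map_sum, hv, hk0]
    exact lemL f n u hu (hfn u) k c hsum i (by omega)
  have h2 : c ⟨m, hmn⟩ ≠ 0 := by
    have hkey : (f ^ (k - 1)) v₀ = c ⟨m, hmn⟩ • (f ^ (n - 1)) u := by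
      conv_lhs => rw [← hv]
      rw [map_sum]
      rw [Finset.sum_eq_single (⟨m, hmn⟩ : Fin n)]
      · rw [map_smul, ← Module.End.mul_apply, ← pow_add,
          show k - 1 + m = n - 1 by omega]
      · intro j _ hj
        rcases lt_or_ge (j : ℕ) m with h | h
        · rw [h1 j h, zero_smul, map_zero]
        · have hj' : m < (j : ℕ) := by
            rcases eq_or_lt_of_le h with h' | h'
            · exact absurd (Fin.ext h'.symm) hj
            · exact h'
          rw [map_smul, ← Module.End.mul_apply, ← pow_add, hz _ (by omega), smul_zero]
      · simp
    intro h
    rw [h, zero_smul] at hkey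
    exact hkm hkey
  set C : ℕ → ℂ := fun i => if h : i < n then c ⟨i, h⟩ else 0 with hC_def
  refine ⟨∑ j ∈ Finset.range n, C (j + m) • (f ^ j) u, ?_, ?_⟩
  · -- f^(n-1) w = C m • f^(n-1) u ≠ 0
    rw [map_sum]
    have : ∀ j ∈ Finset.range n, (f ^ (n - 1)) (C (j + m) • (f ^ j) u)
        = C (j + m) • (f ^ (n - 1 + j)) u := by
      intro j _
      rw [map_smul, ← Module.End.mul_apply, ← pow_add]
    rw [Finset.sum_congr rfl this, Finset.sum_eq_single 0]
    · have hCm : C (0 + m) = c ⟨m, hmn⟩ := by simp [hC_def, hmn]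
      rw [hCm, add_zero]
      intro hcon
      rcases smul_eq_zero.mp hcon with h' | h'
      · exact h2 h'
      · exact hu h'
    · intro j _ hj
      rw [hz (n - 1 + j) (by omega), smul_zero]
    · intro h
      exact absurd (Finset.mem_range.mpr (by omega)) h
  · -- f^m w = v₀
    rw [map_sum]
    have step1 : ∀ j ∈ Finset.range n, (f ^ m) (C (j + m) • (f ^ j) u)
        = C (m + j) • (f ^ (m + j)) u := by
      intro j _
      rw [map_smul, ← Module.End.mul_apply, ← pow_add, Nat.add_comm j m]
    rw [Finset.sum_congr rfl step1]
    have step2 : ∑ j ∈ Finset.range n, C (m + j) • (f ^ (m + j)) u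
        = ∑ i ∈ Finset.Ico m (m + n), C i • (f ^ i) u := by
      rw [Finset.sum_Ico_eq_sum_range]
      simp
    rw [step2]
    have step3 : ∑ i ∈ Finset.Ico m (m + n), C i • (f ^ i) u
        = ∑ i ∈ Finset.Ico m n, C i • (f ^ i) u := by
      symm
      apply Finset.sum_subset
      · intro x hx
        rw [Finset.mem_Ico] at hx ⊢
        omega
      · intro x hx hx'
        rw [Finset.mem_Ico] at hx hx'
        have : ¬ x < n := by omega
        rw [hC_def]
        simp [this]
    rw [step3]
    have step4 : ∑ i ∈ Finset.Ico m n, C i • (f ^ i) u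
        = ∑ i ∈ Finset.range n, C i • (f ^ i) u := by
      apply Finset.sum_subset
      · intro x hx
        rw [Finset.mem_Ico] at hx
        rw [Finset.mem_range]
        omega
      · intro x hx hx'
        rw [Finset.mem_range] at hx
        rw [Finset.mem_Ico] at hx'
        have hxm : x < m := by omega
        rw [hC_def]
        simp only [hx, dif_pos]
        rw [h1 ⟨x, hx⟩ hxm, zero_smul]
    rw [step4, ← hv, ← Fin.sum_univ_eq_sum_range (fun i => C i • (f ^ i) u) n]
    apply Finset.sum_congr rfl
    intro i _
    congr 1
    simp [hC_def, i.2]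

/-- Two regular nilpotent matrices `X`, `X'` with `d(X, v₀) = d(X', v₀)` are conjugate by
an element of the stabilizer `P = {g ∈ GLₙ(ℂ) : g v₀ = v₀}`. -/
theorem stmt_7 (n : ℕ) (hn : 1 ≤ n) (v₀ : Fin n → ℂ) (hv₀ : v₀ ≠ 0)
    (X X' : Matrix (Fin n) (Fin n) ℂ)
    (hXnil : X ^ n = 0) (hXreg : X ^ (n - 1) ≠ 0)
    (hX'nil : X' ^ n = 0) (hX'reg : X' ^ (n - 1) ≠ 0)
    (hd : Module.finrank ℂ
        (Submodule.span ℂ (Set.range fun i : Fin n => (X ^ (i : ℕ)).mulVec v₀)) =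
      Module.finrank ℂ
        (Submodule.span ℂ (Set.range fun i : Fin n => (X' ^ (i : ℕ)).mulVec v₀))) :
    ∃ g : Matrix (Fin n) (Fin n) ℂ, IsUnit g.det ∧ g.mulVec v₀ = v₀ ∧
      g * X * g⁻¹ = X' := by
  classical
  set f : Module.End ℂ (Fin n → ℂ) := Matrix.toLinAlgEquiv' X with hf_def
  set f' : Module.End ℂ (Fin n → ℂ) := Matrix.toLinAlgEquiv' X' with hf'_def
  have hlin : ∀ Y : Matrix (Fin n) (Fin n) ℂ, Matrix.toLin' Y = Matrix.toLinAlgEquiv' Y := by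
    intro Y
    apply LinearMap.ext
    intro v
    rw [Matrix.toLin'_apply, Matrix.toLinAlgEquiv'_apply]
  have hpow : ∀ (Y : Matrix (Fin n) (Fin n) ℂ) (i : ℕ) (v : Fin n → ℂ),
      (Y ^ i).mulVec v = ((Matrix.toLinAlgEquiv' Y : Module.End ℂ (Fin n → ℂ)) ^ i) v := by
    intro Y i v
    rw [← map_pow]
    exact (Matrix.toLinAlgEquiv'_apply _ _).symm
  have hfn : f ^ n = 0 := by rw [hf_def, ← map_pow, hXnil, map_zero]
  have hf'n : f' ^ n = 0 := by rw [hf'_def, ← map_pow, hX'nil, map_zero]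
  have hfnv : ∀ v, (f ^ n) v = 0 := fun v => by rw [hfn]; rfl
  have hf'nv : ∀ v, (f' ^ n) v = 0 := fun v => by rw [hf'n]; rfl
  have hreg : ∃ u, (f ^ (n - 1)) u ≠ 0 := by
    by_contra h
    push_neg at h
    apply hXreg
    have h1 : f ^ (n - 1) = 0 := LinearMap.ext fun v => by rw [h v]; rfl
    have h2 : Matrix.toLinAlgEquiv' (X ^ (n - 1)) = 0 := by rw [map_pow]; exact h1
    have := congrArg (Matrix.toLinAlgEquiv' (R := ℂ) (n := Fin n)).symm h2
    simpa using this
  have hreg' : ∃ u, (f' ^ (n - 1)) u ≠ 0 := by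
    by_contra h
    push_neg at h
    apply hX'reg
    have h1 : f' ^ (n - 1) = 0 := LinearMap.ext fun v => by rw [h v]; rfl
    have h2 : Matrix.toLinAlgEquiv' (X' ^ (n - 1)) = 0 := by rw [map_pow]; exact h1
    have := congrArg (Matrix.toLinAlgEquiv' (R := ℂ) (n := Fin n)).symm h2
    simpa using this
  obtain ⟨u, hu⟩ := hreg
  obtain ⟨u', hu'⟩ := hreg'
  have hex : ∃ k, (f ^ k) v₀ = 0 := ⟨n, hfnv v₀⟩
  have hex' : ∃ k, (f' ^ k) v₀ = 0 := ⟨n, hf'nv v₀⟩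
  set k := Nat.find hex with hk_def
  set k' := Nat.find hex' with hk'_def
  have hk0 : (f ^ k) v₀ = 0 := Nat.find_spec hex
  have hk'0 : (f' ^ k') v₀ = 0 := Nat.find_spec hex'
  have hkpos : 1 ≤ k := by
    by_contra h
    have hk : k = 0 := by omega
    rw [hk, pow_zero] at hk0
    exact hv₀ hk0
  have hk'pos : 1 ≤ k' := by
    by_contra h
    have hk : k' = 0 := by omega
    rw [hk, pow_zero] at hk'0
    exact hv₀ hk'0
  have hkn : k ≤ n := Nat.find_le (hfnv v₀)
  have hk'n : k' ≤ n := Nat.find_le (hf'nv v₀)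
  have hkm : (f ^ (k - 1)) v₀ ≠ 0 := Nat.find_min hex (by omega)
  have hk'm : (f' ^ (k' - 1)) v₀ ≠ 0 := Nat.find_min hex' (by omega)
  have hd1 : (fun i : Fin n => (X ^ (i : ℕ)).mulVec v₀) = fun i : Fin n => (f ^ (i : ℕ)) v₀ :=
    funext fun i => hpow X i v₀
  have hd2 : (fun i : Fin n => (X' ^ (i : ℕ)).mulVec v₀) = fun i : Fin n => (f' ^ (i : ℕ)) v₀ :=
    funext fun i => hpow X' i v₀
  rw [hd1, hd2, lem_finrank n f v₀ k hkn hk0 hkm, lem_finrank n f' v₀ k' hk'n hk'0 hk'm] at hd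
  obtain ⟨w, hw1, hw2⟩ := lem_cyclic n hn f hfn u hu v₀ k hkpos hkn hk0 hkm
  obtain ⟨w', hw'1, hw'2⟩ := lem_cyclic n hn f' hf'n u' hu' v₀ k' hk'pos hk'n hk'0 hk'm
  rw [← hd] at hw'2
  haveI : Nonempty (Fin n) := ⟨⟨0, hn⟩⟩
  have li := lem_li f n w hw1 (hfnv w)
  have li' := lem_li f' n w' hw'1 (hf'nv w')
  have card_eq : Fintype.card (Fin n) = Module.finrank ℂ (Fin n → ℂ) := by
    simp [Module.finrank_fin_fun]
  let b : Basis (Fin n) ℂ (Fin n → ℂ) := basisOfLinearIndependentOfCardEqFinrank li card_eq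
  let b' : Basis (Fin n) ℂ (Fin n → ℂ) := basisOfLinearIndependentOfCardEqFinrank li' card_eq
  have hb : ∀ i : Fin n, b i = (f ^ (i : ℕ)) w := fun i => by
    rw [show b = _ from rfl, coe_basisOfLinearIndependentOfCardEqFinrank]
  have hb' : ∀ i : Fin n, b' i = (f' ^ (i : ℕ)) w' := fun i => by
    rw [show b' = _ from rfl, coe_basisOfLinearIndependentOfCardEqFinrank]
  let e : (Fin n → ℂ) ≃ₗ[ℂ] (Fin n → ℂ) := b.equiv b' (Equiv.refl _)
  have he : ∀ i, e (b i) = b' i := fun i => by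
    rw [show e = b.equiv b' (Equiv.refl _) from rfl, Basis.equiv_apply, Equiv.refl_apply]
  set g := LinearMap.toMatrix' (e : (Fin n → ℂ) →ₗ[ℂ] (Fin n → ℂ)) with hg_def
  have hginv : g * LinearMap.toMatrix' (e.symm : (Fin n → ℂ) →ₗ[ℂ] (Fin n → ℂ)) = 1 := by
    rw [hg_def, ← LinearMap.toMatrix'_comp]
    have h : (e : (Fin n → ℂ) →ₗ[ℂ] (Fin n → ℂ)).comp
        (e.symm : (Fin n → ℂ) →ₗ[ℂ] (Fin n → ℂ)) = LinearMap.id := by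
      apply LinearMap.ext
      intro v
      simp
    rw [h, LinearMap.toMatrix'_id]
  have hdet : IsUnit g.det := Matrix.isUnit_det_of_right_inverse hginv
  have hgToLin : Matrix.toLin' g = (e : (Fin n → ℂ) →ₗ[ℂ] (Fin n → ℂ)) := by
    rw [hg_def, Matrix.toLin'_toMatrix']
  have hmn : n - k < n := by omega
  have hev : e v₀ = v₀ := by
    have h1 : v₀ = b ⟨n - k, hmn⟩ := by rw [hb]; exact hw2.symm
    calc e v₀ = e (b ⟨n - k, hmn⟩) := by rw [← h1]
      _ = b' ⟨n - k, hmn⟩ := he _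
      _ = v₀ := by rw [hb']; exact hw'2
  have hcomm : g * X = X' * g := by
    apply Matrix.toLin'.injective
    rw [Matrix.toLin'_mul, Matrix.toLin'_mul, hgToLin, hlin X, hlin X']
    apply b.ext
    intro i
    rw [LinearMap.comp_apply, LinearMap.comp_apply]
    have hfb : (f : Module.End ℂ (Fin n → ℂ)) (b i) = (f ^ ((i : ℕ) + 1)) w := by
      rw [hb, ← Module.End.mul_apply, ← pow_succ']
    have hf'b : (f' : Module.End ℂ (Fin n → ℂ)) (b' i) = (f' ^ ((i : ℕ) + 1)) w' := by
      rw [hb', ← Module.End.mul_apply, ← pow_succ']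
    simp only [LinearEquiv.coe_coe, ← hf_def, ← hf'_def]
    rw [he, hfb, hf'b]
    by_cases hi : (i : ℕ) + 1 < n
    · have h1 : (f ^ ((i : ℕ) + 1)) w = b ⟨(i : ℕ) + 1, hi⟩ := (hb ⟨(i : ℕ) + 1, hi⟩).symm
      rw [h1, he, hb']
    · have hin : (i : ℕ) + 1 = n := by omega
      rw [hin, hfnv w, hf'nv w', map_zero]
  refine ⟨g, hdet, ?_, ?_⟩
  · have : g.mulVec v₀ = Matrix.toLin' g v₀ := (Matrix.toLin'_apply _ _).symm
    rw [this, hgToLin, LinearEquiv.coe_coe, hev]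
  · calc g * X * g⁻¹ = X' * g * g⁻¹ := by rw [hcomm]
      _ = X' * (g * g⁻¹) := by rw [Matrix.mul_assoc]
      _ = X' := by rw [Matrix.mul_nonsing_inv _ hdet, Matrix.mul_one]
end

section
/- Let n ≥ 1, let X ∈ M_n(ℂ) be regular nilpotent, and let v₀ ∈ ℂⁿ with X^{n−1}v₀ ≠ 0. Then the P-orbit {gXg⁻¹ : g ∈ GL_n(ℂ), g·v₀ = v₀} is an open subset of the GL_n(ℂ)-conjugacy class {gXg⁻¹ : g ∈ GL_n(ℂ)} (with the topology induced from M_n(ℂ)). -/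
open Matrix

/-- The matrix whose `k`-th column is `A^k v`. -/
private noncomputable def cycMat (n : ℕ) (A : Matrix (Fin n) (Fin n) ℂ) (v : Fin n → ℂ) :
    Matrix (Fin n) (Fin n) ℂ :=
  Matrix.of fun i (k : Fin n) => (A ^ (k : ℕ)).mulVec v i

private lemma cycMat_mulVec (n : ℕ) (A : Matrix (Fin n) (Fin n) ℂ) (v : Fin n → ℂ)
    (c : Fin n → ℂ) :
    (cycMat n A v).mulVec c = ∑ j : Fin n, c j • (A ^ (j : ℕ)).mulVec v := by
  funext i
  simp [cycMat, Matrix.mulVec, dotProduct, Finset.sum_apply, mul_comm]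

/-- If `A` is nilpotent of order `n` and `A^(n-1) v ≠ 0`, then the cyclic matrix
`(v, Av, …, A^(n-1)v)` is invertible. -/
private lemma cycMat_isUnit_det (n : ℕ) (A : Matrix (Fin n) (Fin n) ℂ)
    (hA : A ^ n = 0) (v : Fin n → ℂ) (hv : (A ^ (n - 1)).mulVec v ≠ 0) :
    IsUnit (cycMat n A v).det := by
  rw [isUnit_iff_ne_zero]
  intro hdet
  obtain ⟨c, hc0, hBc⟩ := Matrix.exists_mulVec_eq_zero_iff.mpr hdet
  rw [cycMat_mulVec] at hBc
  -- apply A^m to the relation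
  have hm : ∀ m : ℕ, ∑ j : Fin n, c j • (A ^ (m + (j : ℕ))).mulVec v = 0 := by
    intro m
    have := congrArg (A ^ m).mulVecLin hBc
    simpa [map_sum, Matrix.mulVecLin_apply, Matrix.mulVec_smul,
      Matrix.mulVec_mulVec, ← pow_add] using this
  have H : ∀ m : ℕ, ∀ k : Fin n, (k : ℕ) = m → c k = 0 := by
    intro m
    induction m using Nat.strong_induction_on with
    | _ m ih =>
      intro k hk
      have hsum := hm (n - 1 - (k : ℕ))
      rw [Finset.sum_eq_single k] at hsum
      · have hkle : (k : ℕ) ≤ n - 1 := by omega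
        rw [Nat.sub_add_cancel hkle] at hsum
        rcases smul_eq_zero.mp hsum with h | h
        · exact h
        · exact absurd h hv
      · intro j _ hj
        rcases lt_or_gt_of_ne (fun h : (j : ℕ) = (k : ℕ) => hj (Fin.ext h)) with hlt | hgt
        · rw [ih (j : ℕ) (by omega) j rfl, zero_smul]
        · have hge : n ≤ n - 1 - (k : ℕ) + (j : ℕ) := by omega
          obtain ⟨r, hr⟩ := Nat.exists_eq_add_of_le hge
          rw [hr, pow_add, hA, zero_mul, Matrix.zero_mulVec, smul_zero]
      · intro h; exact absurd (Finset.mem_univ k) h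
  have : c = 0 := funext fun k => H (k : ℕ) k rfl
  exact hc0 this

/-- Shift matrix. -/
private noncomputable def shiftMat (n : ℕ) : Matrix (Fin n) (Fin n) ℂ :=
  Matrix.of fun i j => if (i : ℕ) = (j : ℕ) + 1 then 1 else 0

private lemma mul_cycMat (n : ℕ) (A : Matrix (Fin n) (Fin n) ℂ) (hA : A ^ n = 0)
    (v : Fin n → ℂ) : A * cycMat n A v = cycMat n A v * shiftMat n := by
  ext i k
  have hL : (A * cycMat n A v) i k = (A ^ ((k : ℕ) + 1)).mulVec v i := by
    rw [pow_succ']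
    simp only [cycMat, Matrix.mul_apply, Matrix.mulVec, dotProduct, Matrix.of_apply,
      Finset.mul_sum, Finset.sum_mul, mul_assoc]
    rw [Finset.sum_comm]
  have hR : (cycMat n A v * shiftMat n) i k
      = ∑ j : Fin n, if (j : ℕ) = (k : ℕ) + 1 then (A ^ (j : ℕ)).mulVec v i else 0 := by
    simp [cycMat, shiftMat, Matrix.mul_apply, mul_ite]
  rw [hL, hR]
  by_cases hk : (k : ℕ) + 1 < n
  · rw [Finset.sum_eq_single (⟨(k : ℕ) + 1, hk⟩ : Fin n)]
    · simp
    · intro j _ hj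
      rw [if_neg]
      intro h
      exact hj (Fin.ext (by simpa using h))
    · intro h; exact absurd (Finset.mem_univ _) h
  · have hkn : (k : ℕ) + 1 = n := by omega
    rw [hkn, hA]
    have : ∀ j : Fin n, (if (j : ℕ) = n then (A ^ (j : ℕ)).mulVec v i else 0) = 0 := by
      intro j
      rw [if_neg]; omega
    simp [this]

/-- Two nilpotent matrices sharing a cyclic vector are conjugate by a matrix fixing it. -/
private lemma conj_exists (n : ℕ) (hn : 1 ≤ n) (X M : Matrix (Fin n) (Fin n) ℂ)
    (hX : X ^ n = 0) (hM : M ^ n = 0) (v : Fin n → ℂ)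
    (hXv : (X ^ (n - 1)).mulVec v ≠ 0) (hMv : (M ^ (n - 1)).mulVec v ≠ 0) :
    ∃ h : Matrix (Fin n) (Fin n) ℂ, IsUnit h.det ∧ h.mulVec v = v ∧ M = h * X * h⁻¹ := by
  set BX := cycMat n X v with hBXdef
  set BM := cycMat n M v with hBMdef
  have hBX : IsUnit BX.det := cycMat_isUnit_det n X hX v hXv
  have hBM : IsUnit BM.det := cycMat_isUnit_det n M hM v hMv
  set h := BM * BX⁻¹ with hhdef
  have hhdet : IsUnit h.det := by
    rw [hhdef, Matrix.det_mul]
    exact hBM.mul (Matrix.isUnit_nonsing_inv_det _ hBX)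
  refine ⟨h, hhdet, ?_, ?_⟩
  · -- h fixes v
    have e0 : ∀ (A : Matrix (Fin n) (Fin n) ℂ),
        (cycMat n A v).mulVec (Pi.single (⟨0, hn⟩ : Fin n) 1) = v := by
      intro A
      funext i
      rw [Matrix.mulVec_single]
      simp [cycMat]
    have hinv : BX⁻¹.mulVec v = Pi.single (⟨0, hn⟩ : Fin n) 1 := by
      rw [← e0 X, Matrix.mulVec_mulVec, Matrix.nonsing_inv_mul _ hBX, Matrix.one_mulVec]
    rw [hhdef, ← Matrix.mulVec_mulVec, hinv, e0 M]
  · -- conjugation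
    have hXS : X * BX = BX * shiftMat n := mul_cycMat n X hX v
    have hMS : M * BM = BM * shiftMat n := mul_cycMat n M hM v
    have hXinv : BX⁻¹ * X = shiftMat n * BX⁻¹ := by
      have : BX⁻¹ * (X * BX) * BX⁻¹ = BX⁻¹ * (BX * shiftMat n) * BX⁻¹ := by rw [hXS]
      calc BX⁻¹ * X = BX⁻¹ * X * (BX * BX⁻¹) := by
            rw [Matrix.mul_nonsing_inv _ hBX, mul_one]
        _ = BX⁻¹ * (X * BX) * BX⁻¹ := by rw [← mul_assoc, ← mul_assoc]
        _ = BX⁻¹ * (BX * shiftMat n) * BX⁻¹ := this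
        _ = (BX⁻¹ * BX) * shiftMat n * BX⁻¹ := by rw [← mul_assoc]
        _ = shiftMat n * BX⁻¹ := by rw [Matrix.nonsing_inv_mul _ hBX, one_mul]
    have key : h * X = M * h := by
      rw [hhdef]
      calc BM * BX⁻¹ * X = BM * (BX⁻¹ * X) := by rw [mul_assoc]
        _ = BM * (shiftMat n * BX⁻¹) := by rw [hXinv]
        _ = (BM * shiftMat n) * BX⁻¹ := by rw [mul_assoc]
        _ = (M * BM) * BX⁻¹ := by rw [hMS]
        _ = M * (BM * BX⁻¹) := by rw [mul_assoc]
    calc M = M * (h * h⁻¹) := by rw [Matrix.mul_nonsing_inv _ hhdet, mul_one]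
      _ = (M * h) * h⁻¹ := (mul_assoc M h h⁻¹).symm
      _ = (h * X) * h⁻¹ := by rw [key]
      _ = h * X * h⁻¹ := rfl

/-- If `X` is regular nilpotent and `X^(n-1) v₀ ≠ 0`, then the `P`-orbit of `X` (where
`P` is the stabilizer of `v₀` in `GLₙ(ℂ)`) is open in the `GLₙ(ℂ)`-conjugacy class of `X`
for the topology induced from `Mₙ(ℂ)`. -/
theorem stmt_8 (n : ℕ) (hn : 1 ≤ n) (X : Matrix (Fin n) (Fin n) ℂ)
    (hXnil : X ^ n = 0) (hXreg : X ^ (n - 1) ≠ 0)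
    (v₀ : Fin n → ℂ) (hv₀ : (X ^ (n - 1)).mulVec v₀ ≠ 0) :
    ∃ U : Set (Matrix (Fin n) (Fin n) ℂ), IsOpen U ∧
      {M : Matrix (Fin n) (Fin n) ℂ |
          ∃ g : Matrix (Fin n) (Fin n) ℂ, IsUnit g.det ∧ g.mulVec v₀ = v₀ ∧ M = g * X * g⁻¹}
        = U ∩ {M : Matrix (Fin n) (Fin n) ℂ |
            ∃ g : Matrix (Fin n) (Fin n) ℂ, IsUnit g.det ∧ M = g * X * g⁻¹} := by
  refine ⟨{M | (M ^ (n - 1)).mulVec v₀ ≠ 0}, ?_, ?_⟩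
  · have hcont : Continuous fun M : Matrix (Fin n) (Fin n) ℂ => (M ^ (n - 1)).mulVec v₀ :=
      (continuous_pow (n - 1)).matrix_mulVec continuous_const
    have : {M : Matrix (Fin n) (Fin n) ℂ | (M ^ (n - 1)).mulVec v₀ ≠ 0}
        = (fun M : Matrix (Fin n) (Fin n) ℂ => (M ^ (n - 1)).mulVec v₀) ⁻¹' {0}ᶜ := by
      ext M; simp [Set.mem_preimage]
    rw [this]
    exact (isClosed_singleton.preimage hcont).isOpen_compl
  · ext M
    constructor
    · rintro ⟨g, hg, hgv, rfl⟩
      obtain ⟨u, hu⟩ := (Matrix.isUnit_iff_isUnit_det g).mpr hg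
      have hginv : g⁻¹ = (↑u⁻¹ : Matrix (Fin n) (Fin n) ℂ) := by
        rw [Matrix.coe_units_inv, hu]
      have hconjpow : ∀ m : ℕ, (g * X * g⁻¹) ^ m = g * X ^ m * g⁻¹ := by
        intro m
        rw [hginv, ← hu, Units.conj_pow]
      refine ⟨?_, g, hg, rfl⟩
      have hvinv : g⁻¹.mulVec v₀ = v₀ := by
        conv_lhs => rw [← hgv]
        rw [Matrix.mulVec_mulVec, Matrix.nonsing_inv_mul _ hg, Matrix.one_mulVec]
      show ((g * X * g⁻¹) ^ (n - 1)).mulVec v₀ ≠ 0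
      rw [hconjpow, ← Matrix.mulVec_mulVec, ← Matrix.mulVec_mulVec, hvinv]
      intro h0
      apply hv₀
      have := congrArg (g⁻¹.mulVec) h0
      rwa [Matrix.mulVec_mulVec, Matrix.nonsing_inv_mul _ hg, Matrix.one_mulVec,
        Matrix.mulVec_zero] at this
    · rintro ⟨hU, g, hg, rfl⟩
      obtain ⟨u, hu⟩ := (Matrix.isUnit_iff_isUnit_det g).mpr hg
      have hginv : g⁻¹ = (↑u⁻¹ : Matrix (Fin n) (Fin n) ℂ) := by
        rw [Matrix.coe_units_inv, hu]
      have hMn : (g * X * g⁻¹) ^ n = 0 := by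
        rw [hginv, ← hu, Units.conj_pow, hXnil, mul_zero, zero_mul]
      have hMv : ((g * X * g⁻¹) ^ (n - 1)).mulVec v₀ ≠ 0 := hU
      obtain ⟨h, hhdet, hhv, hhconj⟩ :=
        conj_exists n hn X (g * X * g⁻¹) hXnil hMn v₀ hv₀ hMv
      exact ⟨h, hhdet, hhv, hhconj⟩
end

section
/- Let n ≥ 2 and let X ∈ M_n(ℂ) be nilpotent but not regular, i.e., X^{n−1} = 0. Then there exists a diagonalizable matrix Z ∈ M_n(ℂ) with Z ≠ 0, trace(Z) = 0, and XZ = ZX. In particular Z is a nonzero semisimple element of 𝔰𝔩_n(ℂ) commuting with X (equivalently, a non-central semisimple element of 𝔤𝔩_n(ℂ) commuting with X). -/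
/-!
Let `l + 1` be the nilpotency index of `X`, so `l + 1 ≤ n - 1`. Pick `w` and a functional `φ`
with `φ (X^l w) = 1`. The telescoping sum `Y = ∑_{i ≤ l} X^i (φ ⊗ w) X^(l-i)` commutes with `X`,
fixes `X^l w`, and kills every `v ≠ 0` on which the `l + 1 < n` functionals `φ ∘ X^r` vanish.
So `Y` has the two eigenvalues `1` and `0`, and the semisimple part `S` of its Jordan–Chevalley
decomposition, being a polynomial in `Y`, still commutes with `X` and is not a scalar.
Then `Z = S - (tr S / n) • 1` works.
-/

open Module Module.End Finset Matrix

theorem commute_sum_pow_mul_mul_pow {R : Type*} [Ring R] {x : R} {l : ℕ} (hx : x ^ (l + 1) = 0)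
    (e : R) : Commute x (∑ i ∈ range (l + 1), x ^ i * e * x ^ (l - i)) := by
  let f i := x ^ i * e * x ^ (l + 1 - i)
  have hf0 : f 0 = 0 := by simp [f, hx]
  have hfl : f (l + 1) = 0 := by simp [f, hx]
  rw [Commute, SemiconjBy, ← sub_eq_zero, mul_sum, sum_mul, ← sum_sub_distrib]
  calc _ = ∑ i ∈ range (l + 1), (f (i + 1) - f i) := by
        refine sum_congr rfl fun i hi => ?_
        have hi' : l + 1 - i = l - i + 1 := by have := mem_range.mp hi; omega
        simp only [f, Nat.add_sub_add_right, hi', pow_succ' x i, pow_succ x (l - i), mul_assoc]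
    _ = 0 := by rw [sum_range_sub, hf0, hfl, sub_zero]

namespace Module.End

variable {K V : Type*} [Field K] [AddCommGroup V] [Module K V] [FiniteDimensional K V]

theorem exists_ne_zero_forall_le_dual_apply_pow_eq_zero (X : End K V) (φ : Dual K V) {l : ℕ}
    (hl : l + 1 < finrank K V) : ∃ v ≠ 0, ∀ r ≤ l, φ ((X ^ r) v) = 0 := by
  let F : V →ₗ[K] Fin (l + 1) → K := LinearMap.pi fun r => φ ∘ₗ X ^ (r : ℕ)
  have hF : LinearMap.ker F ≠ ⊥ := F.ker_ne_bot_of_finrank_lt (by simpa using hl)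
  obtain ⟨v, hvF, hv⟩ := Submodule.exists_mem_ne_zero_of_ne_bot hF
  refine ⟨v, hv, fun r hr => ?_⟩
  simpa [F] using congrFun (LinearMap.mem_ker.mp hvF) ⟨r, Nat.lt_succ_of_le hr⟩

theorem exists_commute_hasEigenvalue_one_zero {X : End K V} {l : ℕ} (hX : X ^ (l + 1) = 0)
    (hXl : X ^ l ≠ 0) (hl : l + 1 < finrank K V) :
    ∃ Y : End K V, Commute X Y ∧ Y.HasEigenvalue 1 ∧ Y.HasEigenvalue 0 := by
  obtain ⟨w, hw⟩ : ∃ w, (X ^ l) w ≠ 0 := not_forall.mp fun h => hXl (LinearMap.ext h)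
  obtain ⟨φ, hφ⟩ := Projective.exists_dual_eq_one K hw
  obtain ⟨v, hv, hφv⟩ := exists_ne_zero_forall_le_dual_apply_pow_eq_zero X φ hl
  let Y := ∑ i ∈ range (l + 1), X ^ i * φ.smulRight w * X ^ (l - i)
  have hY (x : V) : Y x = ∑ i ∈ range (l + 1), φ ((X ^ (l - i)) x) • (X ^ i) w := by
    simp [Y, LinearMap.sum_apply]
  refine ⟨Y, commute_sum_pow_mul_mul_pow hX _,
    hasEigenvalue_of_hasEigenvector (x := (X ^ l) w) ⟨?_, hw⟩,
    hasEigenvalue_of_hasEigenvector (x := v) ⟨?_, hv⟩⟩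
  · rw [mem_eigenspace_iff, one_smul, hY, sum_eq_single_of_mem l (self_mem_range_succ l),
      Nat.sub_self, pow_zero, one_apply, hφ, one_smul]
    intro i hi _
    have hXpow : X ^ (l - i + l) = 0 := pow_eq_zero_of_le (by have := mem_range.mp hi; omega) hX
    rw [← mul_apply, ← pow_add, hXpow, LinearMap.zero_apply, map_zero, zero_smul]
  · rw [mem_eigenspace_iff, zero_smul, hY]
    exact sum_eq_zero fun i _ => by rw [hφv _ (Nat.sub_le l i), zero_smul]

theorem exists_commute_hasEigenvalue_one_zero_of_pow_finrank_pred_eq_zero {X : End K V}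
    (hV : 0 < finrank K V) (hX : X ^ (finrank K V - 1) = 0) :
    ∃ Y : End K V, Commute X Y ∧ Y.HasEigenvalue 1 ∧ Y.HasEigenvalue 0 := by
  have : Nontrivial V := Module.nontrivial_of_finrank_pos hV
  have hXnil : IsNilpotent X := ⟨_, hX⟩
  have hclass_pos : 0 < nilpotencyClass X := pos_nilpotencyClass_iff.mpr hXnil
  have hclass_le : nilpotencyClass X ≤ finrank K V - 1 := Nat.sInf_le hX
  refine exists_commute_hasEigenvalue_one_zero (l := nilpotencyClass X - 1) ?_
    (pow_pred_nilpotencyClass hXnil) (by omega)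
  rw [Nat.sub_add_cancel hclass_pos]
  exact pow_nilpotencyClass hXnil

theorem exists_isSemisimple_commute_ne_algebraMap [PerfectField K] {X Y : End K V}
    (hXY : Commute X Y) {a b : K} (hab : a ≠ b) (ha : Y.HasEigenvalue a)
    (hb : Y.HasEigenvalue b) :
    ∃ S : End K V, S.IsSemisimple ∧ Commute X S ∧ ∀ c : K, S ≠ algebraMap K (End K V) c := by
  obtain ⟨N, -, S, hS, hN, hSss, hY⟩ := Y.exists_isNilpotent_isSemisimple
  refine ⟨S, hSss, Algebra.commute_of_mem_adjoin_singleton_of_commute hS hXY, ?_⟩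
  rintro c rfl
  have hN' : N = Y - c • 1 := by rw [hY, Algebra.algebraMap_eq_smul_one]; abel
  have eq_of_hasEigenvalue {μ : K} (hμ : Y.HasEigenvalue μ) : μ = c := by
    rw [← sub_eq_zero, ← isNilpotent_iff_eq_zero]
    exact (hasEigenvalue_sub_iff.mpr (by rwa [sub_add_cancel])).isNilpotent_of_isNilpotent
      (hN' ▸ hN)
  exact hab (eq_of_hasEigenvalue ha ▸ eq_of_hasEigenvalue hb ▸ rfl)

theorem exists_isSemisimple_commute_ne_zero_trace_eq_zero [CharZero K] {X S : End K V}
    (hS : S.IsSemisimple) (hXS : Commute X S) (hS_ne : ∀ c : K, S ≠ algebraMap K (End K V) c) :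
    ∃ Z : End K V, Z.IsSemisimple ∧ Commute X Z ∧ Z ≠ 0 ∧ LinearMap.trace K V Z = 0 := by
  have : Nontrivial V := by
    by_contra! h
    exact hS_ne 0 (Subsingleton.elim _ _)
  have hd : (finrank K V : K) ≠ 0 := Nat.cast_ne_zero.mpr finrank_pos.ne'
  refine ⟨S - algebraMap K _ (LinearMap.trace K V S / finrank K V),
    isSemisimple_sub_algebraMap_iff.mpr hS, hXS.sub_right (Algebra.commutes _ _).symm,
    sub_ne_zero.mpr (hS_ne _), ?_⟩
  rw [map_sub, Algebra.algebraMap_eq_smul_one, map_smul, LinearMap.trace_one, smul_eq_mul,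
    div_mul_cancel₀ _ hd, sub_self]

end Module.End

theorem Matrix.isDiagonalizable_of_basis_eigenvectors {n : ℕ} {ι : Type*}
    {A : Matrix (Fin n) (Fin n) ℂ} (b : Basis ι ℂ (Fin n → ℂ)) (μ : ι → ℂ)
    (hb : ∀ i, A *ᵥ b i = μ i • b i) : A.IsDiagonalizable := by
  let std := Pi.basisFun ℂ (Fin n)
  let b' := b.reindex (b.indexEquiv std)
  have hP : b'.toMatrix std * std.toMatrix b' = 1 := b'.toMatrix_mul_toMatrix_flip std
  refine ⟨std.toMatrix b', isUnit_det_of_left_inverse hP, ?_⟩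
  rw [inv_eq_left_inv hP, ← LinearMap.toMatrix'_toLin' A, ← LinearMap.toMatrix_eq_toMatrix',
    basis_toMatrix_mul_linearMap_toMatrix_mul_basis_toMatrix]
  intro i j hij
  rw [LinearMap.toMatrix_apply, toLin'_apply]
  simp [b', hb, hij.symm]

theorem Matrix.isDiagonalizable_of_isSemisimple {n : ℕ} {A : Matrix (Fin n) (Fin n) ℂ}
    (hA : IsSemisimple (toLin' A)) : A.IsDiagonalizable := by
  classical
  have hdecomp := DirectSum.isInternal_submodule_of_iSupIndep_of_iSup_eq_top
    (eigenspaces_iSupIndep (toLin' A)) hA.iSup_eigenspace_eq_top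
  exact isDiagonalizable_of_basis_eigenvectors
    (hdecomp.collectedBasis fun μ => finBasis ℂ (eigenspace (toLin' A) μ)) Sigma.fst
    fun i => mem_eigenspace_iff.mp (hdecomp.collectedBasis_mem _ i)

/-- If `n ≥ 2` and `X` is nilpotent but not regular (`X^(n-1) = 0`), then there is a
nonzero traceless diagonalizable matrix commuting with `X`. -/
theorem stmt_11 (n : ℕ) (hn : 2 ≤ n) (X : Matrix (Fin n) (Fin n) ℂ)
    (hXnil : X ^ (n - 1) = 0) :
    ∃ Z : Matrix (Fin n) (Fin n) ℂ, Z.IsDiagonalizable ∧ Z ≠ 0 ∧ Z.trace = 0 ∧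
      X * Z = Z * X := by
  have hrank : finrank ℂ (Fin n → ℂ) = n := finrank_fin_fun ℂ
  obtain ⟨Y, hXY, hY1, hY0⟩ :=
    exists_commute_hasEigenvalue_one_zero_of_pow_finrank_pred_eq_zero (X := toLin' X)
      (by omega) (by rw [hrank, ← toLin'_pow, hXnil, map_zero])
  obtain ⟨S, hS, hXS, hS_ne⟩ := exists_isSemisimple_commute_ne_algebraMap hXY one_ne_zero hY1 hY0
  obtain ⟨Z, hZ, hXZ, hZ0, hZtr⟩ :=
    exists_isSemisimple_commute_ne_zero_trace_eq_zero hS hXS hS_ne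
  refine ⟨LinearMap.toMatrix' Z, isDiagonalizable_of_isSemisimple (by rwa [toLin'_toMatrix']),
    by simpa using hZ0, by rw [← trace_toLin'_eq, toLin'_toMatrix', hZtr], ?_⟩
  rw [← LinearMap.toMatrix'_toLin' X, ← LinearMap.toMatrix'_mul, ← LinearMap.toMatrix'_mul,
    hXZ.eq]
end

section
/- Let n ≥ 1 and let S ∈ M_n(ℂ) be diagonalizable. Then the trace form is nondegenerate on the centralizer of S: if Y ∈ M_n(ℂ) satisfies SY = YS and trace(YZ) = 0 for every Z ∈ M_n(ℂ) with SZ = ZS, then Y = 0. -/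
open scoped Matrix


lemma trace_mul_conjTranspose_self_eq_zero {n : ℕ} (A : Matrix (Fin n) (Fin n) ℂ)
    (h : (A * Aᴴ).trace = 0) : A = 0 := by
  have key : (A * Aᴴ).trace = ((∑ i, ∑ j, Complex.normSq (A i j) : ℝ) : ℂ) := by
    simp only [Matrix.trace, Matrix.diag, Matrix.mul_apply, Matrix.conjTranspose_apply,
      Complex.star_def, Complex.mul_conj]
    push_cast
    rfl
  rw [key] at h
  have h' : (∑ i, ∑ j, Complex.normSq (A i j) : ℝ) = 0 := by exact_mod_cast h
  ext i j
  have h1 := (Finset.sum_eq_zero_iff_of_nonneg (fun i _ =>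
    Finset.sum_nonneg fun j _ => Complex.normSq_nonneg (A i j))).mp h' i (Finset.mem_univ i)
  have h2 := (Finset.sum_eq_zero_iff_of_nonneg (fun j _ =>
    Complex.normSq_nonneg (A i j))).mp h1 j (Finset.mem_univ j)
  simpa using Complex.normSq_eq_zero.mp h2

/-- For `S` diagonalizable, the trace form is nondegenerate on the centralizer of `S`. -/
theorem stmt_14 (n : ℕ) (hn : 1 ≤ n) (S : Matrix (Fin n) (Fin n) ℂ)
    (hS : S.IsDiagonalizable) (Y : Matrix (Fin n) (Fin n) ℂ)
    (hYS : S * Y = Y * S)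
    (hY : ∀ Z : Matrix (Fin n) (Fin n) ℂ, S * Z = Z * S → (Y * Z).trace = 0) :
    Y = 0 := by
  obtain ⟨P, hP, hDiag⟩ := hS
  set D := P⁻¹ * S * P with hD
  set Y' := P⁻¹ * Y * P with hY'
  have hPP : P * P⁻¹ = 1 := Matrix.mul_nonsing_inv P hP
  have hPP' : P⁻¹ * P = 1 := Matrix.nonsing_inv_mul P hP
  have hSdec : S = P * D * P⁻¹ := by
    rw [hD]
    rw [show P * (P⁻¹ * S * P) * P⁻¹ = (P * P⁻¹) * S * (P * P⁻¹) by noncomm_ring]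
    rw [hPP]; simp
  have hYdec : Y = P * Y' * P⁻¹ := by
    rw [hY']
    rw [show P * (P⁻¹ * Y * P) * P⁻¹ = (P * P⁻¹) * Y * (P * P⁻¹) by noncomm_ring]
    rw [hPP]; simp
  -- D commutes with Y'
  have hDY : D * Y' = Y' * D := by
    rw [hD, hY']
    calc P⁻¹ * S * P * (P⁻¹ * Y * P) = P⁻¹ * S * (P * P⁻¹) * Y * P := by noncomm_ring
    _ = P⁻¹ * (S * Y) * P := by rw [hPP]; noncomm_ring
    _ = P⁻¹ * (Y * S) * P := by rw [hYS]
    _ = P⁻¹ * Y * (P * P⁻¹) * S * P := by rw [hPP]; noncomm_ring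
    _ = P⁻¹ * Y * P * (P⁻¹ * S * P) := by noncomm_ring
  -- entrywise commutation condition
  have hcomm : ∀ i j, D i i * Y' i j = Y' i j * D j j := by
    intro i j
    have h1 := congrFun (congrFun hDY i) j
    simp only [Matrix.mul_apply] at h1
    rwa [Finset.sum_eq_single i (fun k _ hk => by rw [hDiag (Ne.symm hk), zero_mul])
        (by simp), Finset.sum_eq_single j (fun k _ hk => by rw [hDiag hk, mul_zero])
        (by simp)] at h1
  -- Y'ᴴ commutes with D
  have hDYH : D * Y'ᴴ = Y'ᴴ * D := by
    ext i j
    simp only [Matrix.mul_apply]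
    rw [Finset.sum_eq_single i (fun k _ hk => by rw [hDiag (Ne.symm hk), zero_mul]) (by simp),
      Finset.sum_eq_single j (fun k _ hk => by rw [hDiag hk, mul_zero]) (by simp)]
    simp only [Matrix.conjTranspose_apply]
    rcases eq_or_ne (Y' j i) 0 with h | h
    · simp [h]
    · have := hcomm j i
      have hd : D j j = D i i := by
        have h0 : (D j j - D i i) * Y' j i = 0 := by rw [sub_mul, this]; ring
        rcases mul_eq_zero.mp h0 with h' | h'
        · exact sub_eq_zero.mp h'
        · exact absurd h' h
      rw [hd, mul_comm]
  -- define Z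
  set Z := P * Y'ᴴ * P⁻¹ with hZ
  have hSZ : S * Z = Z * S := by
    rw [hZ, hSdec]
    calc P * D * P⁻¹ * (P * Y'ᴴ * P⁻¹) = P * D * (P⁻¹ * P) * Y'ᴴ * P⁻¹ := by noncomm_ring
    _ = P * (D * Y'ᴴ) * P⁻¹ := by rw [hPP']; noncomm_ring
    _ = P * (Y'ᴴ * D) * P⁻¹ := by rw [hDYH]
    _ = P * Y'ᴴ * (P⁻¹ * P) * D * P⁻¹ := by rw [hPP']; noncomm_ring
    _ = P * Y'ᴴ * P⁻¹ * (P * D * P⁻¹) := by noncomm_ring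
  have htr := hY Z hSZ
  have htr' : (Y' * Y'ᴴ).trace = 0 := by
    rw [hYdec, hZ] at htr
    rw [show P * Y' * P⁻¹ * (P * Y'ᴴ * P⁻¹) = P * Y' * (P⁻¹ * P) * Y'ᴴ * P⁻¹ by noncomm_ring,
      hPP'] at htr
    rw [show P * Y' * 1 * Y'ᴴ * P⁻¹ = P * (Y' * Y'ᴴ) * P⁻¹ by noncomm_ring] at htr
    rwa [Matrix.trace_mul_cycle, show P⁻¹ * P * (Y' * Y'ᴴ) = Y' * Y'ᴴ by rw [hPP']; simp] at htr
  have : Y' = 0 := trace_mul_conjTranspose_self_eq_zero Y' htr'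
  rw [hYdec, this]
  simp
end
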